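/- arXiv:2002.11396 — 2 statements merged into one kernel-verified Lean document; each statement's English description precedes it below -/
import Mathlib

section
/- Given five points p1,...,p5 in the complex projective plane such that no three of them are collinear, there exists a unique irreducible conic passing through all five points. -/
/-!
Conics form a six-dimensional space, so some conic passes through any five points. A reducible
conic is a product of two linear forms; of five points on it, three lie on one of the two lines.

For uniqueness, let `Q` be a quadratic form vanishing at the five points and also at
`v₀ + v₁`, a third point on the line `v₀v₁`. In coordinates `x = a v₀ + b v₁ + c v₂`
one finds `Q x = c · B(x, v₂)` with `B` the polar form: the line `c = 0` is a component.
Since `c ≠ 0` at `v₃` and `v₄`, the linear form `B(·, v₂)` vanishes at `v₂, v₃, v₄`, hence is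
zero, and so is `Q`. Given two conics `f, g` through the five points, apply this to
`f(v₀ + v₁) g - g(v₀ + v₁) f`.
-/

open scoped LinearAlgebra.Projectivization
open MvPolynomial

/-- The vector space `ℂ³`. -/
abbrev V3 : Type := Fin 3 → ℂ

/-- The complex projective plane. -/
abbrev P2 := ℙ ℂ V3

/-- Three points of `ℙ²` are collinear if they lie on a common line. -/
def Coll (p q r : P2) : Prop :=
  ∃ f : Module.Dual ℂ V3, f ≠ 0 ∧ f p.rep = 0 ∧ f q.rep = 0 ∧ f r.rep = 0

/-- `f` defines a conic: a nonzero homogeneous polynomial of degree 2 in three variables. -/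
def IsConic (f : MvPolynomial (Fin 3) ℂ) : Prop :=
  f.IsHomogeneous 2 ∧ f ≠ 0

/-- The plane curve with (homogeneous) equation `f = 0` passes through the point `p ∈ ℙ²`. -/
def PassesThrough (f : MvPolynomial (Fin 3) ℂ) (p : P2) : Prop :=
  eval p.rep f = 0

section NoThreeCollinear

variable {K V : Type*} [Field K] [AddCommGroup V] [Module K V]

-- The `v i` represent points of `ℙ(V)`; when `dim V = 3` the kernels of nonzero functionals
-- are the lines.
variable (K) in
def NoThreeCollinear {ι : Type*} (v : ι → V) : Prop :=
  ∀ i j k, i ≠ j → i ≠ k → j ≠ k →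
    ∀ φ : Module.Dual K V, φ (v i) = 0 → φ (v j) = 0 → φ (v k) = 0 → φ = 0

theorem NoThreeCollinear.linearIndependent [FiniteDimensional K V] (hV : Module.finrank K V = 3)
    {ι : Type*} {v : ι → V} (hv : NoThreeCollinear K v) {i j k : ι}
    (hij : i ≠ j) (hik : i ≠ k) (hjk : j ≠ k) : LinearIndependent K ![v i, v j, v k] := by
  by_contra hli
  have hlt : Submodule.span K (Set.range ![v i, v j, v k]) < ⊤ := by
    refine lt_top_iff_ne_top.mpr fun htop => hli ?_
    rw [linearIndependent_iff_card_eq_finrank_span, Set.finrank, htop, finrank_top, hV,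
      Fintype.card_fin]
  obtain ⟨φ, hφ, hker⟩ := Submodule.exists_le_ker_of_lt_top _ hlt
  exact hφ <| hv i j k hij hik hjk φ (hker (Submodule.subset_span ⟨0, rfl⟩))
    (hker (Submodule.subset_span ⟨1, rfl⟩)) (hker (Submodule.subset_span ⟨2, rfl⟩))

theorem NoThreeCollinear.exists_mul_apply_ne_zero {v : Fin 5 → V} (hv : NoThreeCollinear K v)
    {φ ψ : Module.Dual K V} (hφ : φ ≠ 0) (hψ : ψ ≠ 0) : ∃ i, φ (v i) * ψ (v i) ≠ 0 := by
  classical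
  by_contra! h
  let S := Finset.univ.filter fun i => φ (v i) = 0
  rcases lt_or_ge 2 S.card with hS | hS
  · obtain ⟨i, j, k, hi, hj, hk, hij, hik, hjk⟩ := Finset.two_lt_card_iff.mp hS
    simp only [S, Finset.mem_filter, Finset.mem_univ, true_and] at hi hj hk
    exact hφ (hv i j k hij hik hjk φ hi hj hk)
  · have hSc : 2 < Sᶜ.card := by rw [Finset.card_compl, Fintype.card_fin]; omega
    obtain ⟨i, j, k, hi, hj, hk, hij, hik, hjk⟩ := Finset.two_lt_card_iff.mp hSc
    simp only [S, Finset.compl_filter, Finset.mem_filter, Finset.mem_univ, true_and] at hi hj hk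
    exact hψ (hv i j k hij hik hjk ψ ((mul_eq_zero.mp (h i)).resolve_left hi)
      ((mul_eq_zero.mp (h j)).resolve_left hj) ((mul_eq_zero.mp (h k)).resolve_left hk))

end NoThreeCollinear

namespace QuadraticMap

variable {K V : Type*} [Field K] [AddCommGroup V] [Module K V]

theorem apply_eq_mul_polar (Q : QuadraticMap K V K) {u v w : V}
    (hu : Q u = 0) (hv : Q v = 0) (hw : Q w = 0) (huv : Q (u + v) = 0) (a b c : K) :
    Q (a • u + b • v + c • w) = c * polar Q (a • u + b • v + c • w) w := by
  have huv' : polar Q u v = 0 := by rw [polar, huv, hu, hv, sub_zero, sub_zero]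
  have hww : polar Q w w = 0 := by rw [polar_self, hw, smul_zero]
  rw [QuadraticMap.map_add Q, QuadraticMap.map_add Q]
  simp only [QuadraticMap.map_smul, polar_add_left, polar_smul_left, polar_smul_right,
    hu, hv, hw, huv', hww, smul_eq_mul]
  ring

theorem eq_zero_of_noThreeCollinear [FiniteDimensional K V] (hV : Module.finrank K V = 3)
    (Q : QuadraticMap K V K) {v : Fin 5 → V} (hv : NoThreeCollinear K v)
    (hQ : ∀ i, Q (v i) = 0) (h01 : Q (v 0 + v 1) = 0) : Q = 0 := by
  let b := basisOfLinearIndependentOfCardEqFinrank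
    (hv.linearIndependent hV (i := 0) (j := 1) (k := 2) (by decide) (by decide) (by decide))
    (by rw [Fintype.card_fin, hV])
  obtain ⟨hb0, hb1, hb2⟩ : b 0 = v 0 ∧ b 1 = v 1 ∧ b 2 = v 2 := by simp [b]
  let κ := b.coord 2
  let m := (polarBilin Q).flip (v 2)
  have hκm : ∀ x, Q x = κ x * m x := fun x => by
    have hx : x = b.repr x 0 • v 0 + b.repr x 1 • v 1 + b.repr x 2 • v 2 := by
      conv_lhs => rw [← b.sum_repr x, Fin.sum_univ_three, hb0, hb1, hb2]
    have := Q.apply_eq_mul_polar (hQ 0) (hQ 1) (hQ 2) h01 (b.repr x 0) (b.repr x 1) (b.repr x 2)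
    rwa [← hx] at this
  obtain ⟨hκ0, hκ1, hκ2⟩ : κ (v 0) = 0 ∧ κ (v 1) = 0 ∧ κ (v 2) = 1 := by
    simp [κ, ← hb0, ← hb1, ← hb2]
  have hκ_ne_zero : ∀ i, 1 < i.val → κ (v i) ≠ 0 := fun i hi h => by
    simp [hv 0 1 i (by decide) (by omega) (by omega) κ hκ0 hκ1 h] at hκ2
  have hm : ∀ i, 1 < i.val → m (v i) = 0 := fun i hi => by
    by_cases hi2 : i = 2
    · subst hi2
      simp [m, polar_self, hQ 2]
    · have := hQ i
      rw [hκm] at this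
      exact (mul_eq_zero.mp this).resolve_left (hκ_ne_zero i hi)
  have hm0 : m = 0 := hv 2 3 4 (by decide) (by decide) (by decide) m
    (hm 2 (by decide)) (hm 3 (by decide)) (hm 4 (by decide))
  ext x
  rw [hκm, hm0, LinearMap.zero_apply, mul_zero, zero_apply]

end QuadraticMap

namespace MvPolynomial

section CommSemiring

variable {R σ : Type*} [CommSemiring R]

theorem IsHomogeneous.exists_linearMap_eval_eq {L : MvPolynomial σ R} (hL : L.IsHomogeneous 1) :
    ∃ φ : Module.Dual R (σ → R), ∀ x, φ x = eval x L := by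
  rw [← mem_homogeneousSubmodule, homogeneousSubmodule_one_eq_span_X] at hL
  induction hL using Submodule.span_induction with
  | mem _ h =>
    obtain ⟨i, rfl⟩ := h
    exact ⟨LinearMap.proj i, fun x => by simp⟩
  | zero => exact ⟨0, fun x => by simp⟩
  | add _ _ _ _ hp hq =>
    obtain ⟨φ, hφ⟩ := hp
    obtain ⟨ψ, hψ⟩ := hq
    exact ⟨φ + ψ, fun x => by simp [hφ, hψ]⟩
  | smul c _ _ hp =>
    obtain ⟨φ, hφ⟩ := hp
    exact ⟨c • φ, fun x => by simp [hφ]⟩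

theorem IsHomogeneous.exists_quadraticMap_eval_eq {q : MvPolynomial σ R} (hq : q.IsHomogeneous 2) :
    ∃ Q : QuadraticMap R (σ → R) R, ∀ x, Q x = eval x q := by
  rw [← mem_homogeneousSubmodule, ← homogeneousSubmodule_one_pow, pow_two] at hq
  refine Submodule.mul_induction_on hq (fun L hL M hM => ?_) fun _ _ ⟨P, hP⟩ ⟨Q, hQ⟩ =>
    ⟨P + Q, fun x => by simp [hP, hQ]⟩
  obtain ⟨φ, hφ⟩ := IsHomogeneous.exists_linearMap_eval_eq hL
  obtain ⟨ψ, hψ⟩ := IsHomogeneous.exists_linearMap_eval_eq hM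
  exact ⟨QuadraticMap.linMulLin φ ψ, fun x => by simp [hφ, hψ]⟩

theorem homogeneousComponent_add_mul {m n : ℕ} {g h : MvPolynomial σ R}
    (hg : g.totalDegree ≤ m) (hh : h.totalDegree ≤ n) :
    homogeneousComponent (m + n) (g * h) = homogeneousComponent m g * homogeneousComponent n h := by
  classical
  ext d
  simp only [coeff_homogeneousComponent, coeff_mul]
  have hdeg : ∀ x ∈ Finset.HasAntidiagonal.antidiagonal d, x.1.degree + x.2.degree = d.degree :=
    fun x hx => by rw [← Finset.HasAntidiagonal.mem_antidiagonal.mp hx, map_add]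
  split_ifs with hd
  · refine Finset.sum_congr rfl fun x hx => ?_
    have := hdeg x hx
    by_cases h1 : x.1.degree = m
    · rw [if_pos h1, if_pos (by omega)]
    · rw [if_neg h1, zero_mul]
      rcases Nat.lt_or_gt_of_ne h1 with hlt | hgt
      · rw [coeff_eq_zero_of_totalDegree_lt (show h.totalDegree < x.2.degree by omega), mul_zero]
      · rw [coeff_eq_zero_of_totalDegree_lt (show g.totalDegree < x.1.degree by omega), zero_mul]
  · refine (Finset.sum_eq_zero fun x hx => ?_).symm
    have := hdeg x hx
    split_ifs <;> first | omega | simp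

end CommSemiring

section Field

variable {K σ : Type*} [Field K]

theorem exists_isHomogeneous_ne_zero_eval_eq_zero [Fintype σ] [DecidableEq σ] {ι : Type*}
    [Fintype ι] (n : ℕ) (v : ι → σ → K)
    (hcard : Fintype.card ι < (Fintype.card σ + n - 1).choose n) :
    ∃ q : MvPolynomial σ K, q.IsHomogeneous n ∧ q ≠ 0 ∧ ∀ i, eval (v i) q = 0 := by
  let D := (Finset.univ : Finset σ).finsuppAntidiag n
  let m : D → MvPolynomial σ K := fun d => monomial d 1
  let ev : MvPolynomial σ K →ₗ[K] ι → K := LinearMap.pi fun i => (aeval (v i)).toLinearMap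
  have hm : LinearIndependent K m :=
    (basisMonomials σ K).linearIndependent.comp _ Subtype.val_injective
  have hev : ¬ LinearIndependent K (ev ∘ m) := fun h => by
    have := h.fintype_card_le_finrank
    rw [Module.finrank_fintype_fun_eq_card, Fintype.card_coe,
      Finset.card_finsuppAntidiag_nat_eq_choose, Finset.card_univ] at this
    omega
  obtain ⟨t, ht, d, hd⟩ := Fintype.not_linearIndependent_iff.mp hev
  refine ⟨∑ d, t d • m d, ?_, fun h0 => hd (Fintype.linearIndependent_iff.mp hm t h0 d),
    fun i => ?_⟩
  · refine Submodule.sum_mem (homogeneousSubmodule σ K n) fun d _ => Submodule.smul_mem _ _ ?_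
    refine isHomogeneous_monomial _ ?_
    have := (Finset.mem_finsuppAntidiag.mp d.2).1
    rwa [Finsupp.degree_eq_sum]
  · simpa [ev, smul_eval] using congr_fun ht i

theorem totalDegree_pos_of_not_isUnit {g : MvPolynomial σ K} (hg0 : g ≠ 0) (hg : ¬ IsUnit g) :
    0 < g.totalDegree := by
  refine Nat.pos_of_ne_zero fun h0 => hg (isUnit_iff_totalDegree_of_isReduced.mpr ⟨?_, h0⟩)
  refine isUnit_iff_ne_zero.mpr fun hc => hg0 ?_
  rw [totalDegree_eq_zero_iff_eq_C.mp h0, hc, map_zero]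

theorem IsHomogeneous.exists_eq_mul_of_not_irreducible {f : MvPolynomial σ K}
    (hf : f.IsHomogeneous 2) (hf0 : f ≠ 0) (hirr : ¬ Irreducible f) :
    ∃ L M : MvPolynomial σ K, L.IsHomogeneous 1 ∧ M.IsHomogeneous 1 ∧ f = L * M := by
  have hnu : ¬ IsUnit f := fun hu => by
    have := (isUnit_iff_totalDegree_of_isReduced.mp hu).2
    rw [hf.totalDegree hf0] at this
    exact two_ne_zero this
  obtain ⟨g, h, rfl, hg, hh⟩ : ∃ g h, f = g * h ∧ ¬ IsUnit g ∧ ¬ IsUnit h := by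
    by_contra! hcon
    exact hirr ⟨hnu, fun g h hgh => or_iff_not_imp_left.mpr (hcon g h hgh)⟩
  have hg0 : g ≠ 0 := left_ne_zero_of_mul hf0
  have hh0 : h ≠ 0 := right_ne_zero_of_mul hf0
  have hdeg := hf.totalDegree hf0
  rw [totalDegree_mul_of_isDomain hg0 hh0] at hdeg
  have hg1 := totalDegree_pos_of_not_isUnit hg0 hg
  have hh1 := totalDegree_pos_of_not_isUnit hh0 hh
  refine ⟨homogeneousComponent 1 g, homogeneousComponent 1 h,
    homogeneousComponent_isHomogeneous 1 g, homogeneousComponent_isHomogeneous 1 h, ?_⟩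
  rw [← homogeneousComponent_eq_self hf]
  exact homogeneousComponent_add_mul (m := 1) (n := 1) (by omega) (by omega)

end Field

section InfiniteField

variable {K σ : Type*} [Field K] [Infinite K]

theorem IsHomogeneous.irreducible_of_noThreeCollinear {f : MvPolynomial σ K}
    (hf : f.IsHomogeneous 2) (hf0 : f ≠ 0) {v : Fin 5 → σ → K} (hv : NoThreeCollinear K v)
    (hfv : ∀ i, eval (v i) f = 0) : Irreducible f := by
  by_contra hirr
  obtain ⟨L, M, hL, hM, rfl⟩ := hf.exists_eq_mul_of_not_irreducible hf0 hirr
  obtain ⟨φ, hφ⟩ := hL.exists_linearMap_eval_eq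
  obtain ⟨ψ, hψ⟩ := hM.exists_linearMap_eval_eq
  have hφ0 : φ ≠ 0 := fun h0 =>
    left_ne_zero_of_mul hf0 (MvPolynomial.funext fun x => by simp [← hφ, h0])
  have hψ0 : ψ ≠ 0 := fun h0 =>
    right_ne_zero_of_mul hf0 (MvPolynomial.funext fun x => by simp [← hψ, h0])
  obtain ⟨i, hi⟩ := hv.exists_mul_apply_ne_zero hφ0 hψ0
  rw [hφ, hψ, ← map_mul] at hi
  exact hi (hfv i)

theorem IsHomogeneous.eq_zero_of_noThreeCollinear {q : MvPolynomial (Fin 3) K}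
    (hq : q.IsHomogeneous 2) {v : Fin 5 → Fin 3 → K} (hv : NoThreeCollinear K v)
    (hqv : ∀ i, eval (v i) q = 0) (h01 : eval (v 0 + v 1) q = 0) : q = 0 := by
  obtain ⟨Q, hQ⟩ := hq.exists_quadraticMap_eval_eq
  have hQ0 := Q.eq_zero_of_noThreeCollinear (by simp) hv (by simpa [hQ]) (by simpa [hQ])
  exact MvPolynomial.funext fun x => by simp [← hQ, hQ0]

theorem IsHomogeneous.exists_smul_eq_of_noThreeCollinear {f g : MvPolynomial (Fin 3) K}
    (hf : f.IsHomogeneous 2) (hf0 : f ≠ 0) (hg : g.IsHomogeneous 2) (hg0 : g ≠ 0)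
    {v : Fin 5 → Fin 3 → K} (hv : NoThreeCollinear K v)
    (hfv : ∀ i, eval (v i) f = 0) (hgv : ∀ i, eval (v i) g = 0) :
    ∃ c : K, c ≠ 0 ∧ g = c • f := by
  let w := v 0 + v 1
  have hfw : eval w f ≠ 0 := fun h => hf0 (hf.eq_zero_of_noThreeCollinear hv hfv h)
  have hcomb : eval w f • g - eval w g • f = 0 := by
    refine IsHomogeneous.eq_zero_of_noThreeCollinear ?_ hv (fun i => ?_) ?_
    · exact Submodule.sub_mem (homogeneousSubmodule _ K 2) (Submodule.smul_mem _ _ hg)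
        (Submodule.smul_mem _ _ hf)
    · simp [smul_eval, hfv i, hgv i]
    · simp only [map_sub, smul_eval]
      ring
  rw [sub_eq_zero] at hcomb
  refine ⟨eval w g / eval w f, fun hc => hg0 ?_, ?_⟩
  · rw [div_eq_zero_iff, or_iff_left hfw] at hc
    rw [hc, zero_smul] at hcomb
    exact (smul_eq_zero.mp hcomb).resolve_left hfw
  · rw [div_eq_inv_mul, mul_smul, ← hcomb, inv_smul_smul₀ hfw]

end InfiniteField

end MvPolynomial

/-- Given five points of `ℙ²` no three of which are collinear, there is a unique
irreducible conic through all five (unique in the sense that any other such conic is a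
nonzero scalar multiple, i.e. defines the same curve). -/
theorem stmt1 (p : Fin 5 → P2)
    (h : ∀ i j k : Fin 5, i ≠ j → i ≠ k → j ≠ k → ¬ Coll (p i) (p j) (p k)) :
    ∃ f : MvPolynomial (Fin 3) ℂ,
      (IsConic f ∧ Irreducible f ∧ ∀ i, PassesThrough f (p i)) ∧
      ∀ g : MvPolynomial (Fin 3) ℂ,
        (IsConic g ∧ Irreducible g ∧ ∀ i, PassesThrough g (p i)) →
        ∃ c : ℂ, c ≠ 0 ∧ g = c • f := by
  have hv : NoThreeCollinear ℂ fun i => (p i).rep := fun i j k hij hik hjk φ hi hj hk => by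
    by_contra hφ
    exact h i j k hij hik hjk ⟨φ, hφ, hi, hj, hk⟩
  obtain ⟨f, hf, hf0, hfv⟩ :=
    exists_isHomogeneous_ne_zero_eval_eq_zero 2 (fun i => (p i).rep) (by simp [Nat.choose])
  refine ⟨f, ⟨⟨hf, hf0⟩, hf.irreducible_of_noThreeCollinear hf0 hv hfv, hfv⟩, ?_⟩
  rintro g ⟨⟨hg, hg0⟩, -, hgv⟩
  exact hf.exists_smul_eq_of_noThreeCollinear hf0 hg hg0 hv hfv hgv
end

section
/- Let p1 = [1:0:0], p2 = [0:1:0], p3 = [0:0:1] in P^2 and t5 ∈ C*. The conic xz - xy - t5*yz = 0 is irreducible, passes through p1, p2, p3, has tangent line y = z at p1, and (in the second infinitesimal neighborhood) passes through the point of standard coordinates (p1, 1, t5); it is the unique such conic. -/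
open MvPolynomial

/-- The conic `xz - xy - t·yz = 0` (variables `X 0 = x`, `X 1 = y`, `X 2 = z`). -/
noncomputable def conic8 (t : ℂ) : MvPolynomial (Fin 3) ℂ :=
  X 0 * X 2 - X 0 * X 1 - C t * X 1 * X 2

/-- Local equation of the curve `g = 0` in the affine chart `x = 1` with coordinates
`(y,z)`. -/
noncomputable def localEq (g : MvPolynomial (Fin 3) ℂ) (y z : ℂ) : ℂ :=
  eval ![1, y, z] g

/-- The curve `g = 0` passes through the point with standard coordinates `(p₁, 1, t)`,
where `p₁ = [1:0:0]`: the composite of the two blow-ups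
`(y,z) = (y₁, y₁z₁)`, `z₁ = w + 1`, `(y₁, w) = (y₂, y₂w₂)` pulls back the local equation
with exceptional factor exactly `y₂²`, and the resulting strict transform vanishes at
`(y₂, w₂) = (0, t)`. -/
def PassesInf8 (g : MvPolynomial (Fin 3) ℂ) (t : ℂ) : Prop :=
  ∃ h : MvPolynomial (Fin 2) ℂ,
    (∀ y₂ w₂ : ℂ, localEq g y₂ (y₂ * (y₂ * w₂ + 1)) = y₂ ^ 2 * eval ![y₂, w₂] h) ∧
    eval ![0, t] h = 0

/-- The curve `g = 0` is smooth at the point with representative `v`, with tangent line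
`y = z` there. -/
def TangentYeqZ (g : MvPolynomial (Fin 3) ℂ) (v : Fin 3 → ℂ) : Prop :=
  ∀ w : Fin 3 → ℂ, (∑ i, eval v (pderiv i g) * w i) = 0 ↔ w 1 = w 2

/-!
A conic through the three coordinate points has no square terms, so it is `a xy + b xz + c yz`.
Tangency to `y = z` at `[1:0:0]` forces `b = -a ≠ 0`. In the chart `x = 1` the local equation
`a y - a z + c yz`, pulled back along the two blow-ups, is `y₂² (c (y₂ w₂ + 1) - a w₂)`, so its
strict transform passes through `(0, t)` iff `c = a t`.

Irreducibility: the conic is `(x - t y) z - x y`, linear in `z`, and its two coefficients are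
coprime because the irreducible form `x - t y` vanishes at `[t:1:0]`, where `x y` does not.
-/

open scoped Pointwise

theorem MvPolynomial.IsHomogeneous.exists_eq_sum_C_mul_X_mul_X {σ R : Type*} [CommSemiring R]
    [Fintype σ] {φ : MvPolynomial σ R} (hφ : φ.IsHomogeneous 2) :
    ∃ c : σ → σ → R, φ = ∑ i, ∑ j, C (c i j) * X i * X j := by
  rw [← mem_homogeneousSubmodule, ← homogeneousSubmodule_one_pow, pow_two,
    homogeneousSubmodule_one_eq_span_X, Submodule.span_mul_span] at hφ
  have : Set.range (X : σ → MvPolynomial σ R) * Set.range X =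
      Set.range fun p : σ × σ => X p.1 * X p.2 := by
    ext; simp [Set.mem_mul]
  rw [this, Submodule.mem_span_range_iff_exists_fun] at hφ
  obtain ⟨c, hc⟩ := hφ
  refine ⟨fun i j => c (i, j), ?_⟩
  rw [← hc, Fintype.sum_prod_type]
  simp [smul_eq_C_mul, mul_assoc]

theorem MvPolynomial.eq_of_forall_pow_mul_eval_eq {σ R : Type*} [CommRing R] [IsDomain R]
    [Infinite R] {p q : MvPolynomial σ R} (i : σ) (k : ℕ)
    (h : ∀ v, v i ^ k * eval v p = v i ^ k * eval v q) : p = q :=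
  mul_left_cancel₀ (pow_ne_zero k (X_ne_zero i)) (funext fun v => by simpa using h v)

section CircumConic

variable {R : Type*} [CommRing R]

/-- The conics through the coordinate points `[1:0:0]`, `[0:1:0]`, `[0:0:1]`. -/
noncomputable def circumConic (a b c : R) : MvPolynomial (Fin 3) R :=
  C a * X 0 * X 1 + C b * X 0 * X 2 + C c * X 1 * X 2

theorem isHomogeneous_circumConic (a b c : R) : (circumConic a b c).IsHomogeneous 2 :=
  (((isHomogeneous_C_mul_X a 0).mul (isHomogeneous_X R 1)).add
    ((isHomogeneous_C_mul_X b 0).mul (isHomogeneous_X R 2))).add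
    ((isHomogeneous_C_mul_X c 1).mul (isHomogeneous_X R 2))

theorem exists_eq_circumConic {g : MvPolynomial (Fin 3) R} (hg : g.IsHomogeneous 2)
    (h₁ : eval ![1, 0, 0] g = 0) (h₂ : eval ![0, 1, 0] g = 0) (h₃ : eval ![0, 0, 1] g = 0) :
    ∃ a b c : R, g = circumConic a b c := by
  obtain ⟨c, rfl⟩ := hg.exists_eq_sum_C_mul_X_mul_X
  simp only [Fin.sum_univ_three, map_add, map_mul, eval_C, eval_X, Matrix.cons_val_zero,
    Matrix.cons_val_one, Matrix.cons_val, mul_one, mul_zero, add_zero, zero_add] at h₁ h₂ h₃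
  refine ⟨c 0 1 + c 1 0, c 0 2 + c 2 0, c 1 2 + c 2 1, ?_⟩
  simp only [Fin.sum_univ_three, circumConic, map_add, h₁, h₂, h₃, map_zero]
  ring

theorem sum_eval_pderiv_circumConic (a b c : R) (w : Fin 3 → R) :
    ∑ i, eval ![1, 0, 0] (pderiv i (circumConic a b c)) * w i = a * w 1 + b * w 2 := by
  simp [circumConic, Fin.sum_univ_three, pderiv_X]

end CircumConic

theorem tangentYeqZ_circumConic_iff {a b c : ℂ} :
    TangentYeqZ (circumConic a b c) ![1, 0, 0] ↔ a ≠ 0 ∧ b = -a := by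
  simp only [TangentYeqZ, sum_eval_pderiv_circumConic]
  constructor
  · intro h
    have hab := (h ![0, 1, 1]).2 rfl
    have ha := (h ![0, 1, 0]).not.2 (by simp)
    simp only [Matrix.cons_val] at hab ha
    exact ⟨by simpa using ha, by linear_combination hab⟩
  · rintro ⟨ha, rfl⟩ w
    rw [neg_mul, ← sub_eq_add_neg, ← mul_sub, mul_eq_zero, sub_eq_zero, or_iff_right ha]

theorem localEq_circumConic (a b c y z : ℂ) :
    localEq (circumConic a b c) y z = a * y + b * z + c * (y * z) := by
  simp only [localEq, circumConic, map_add, map_mul, eval_C, eval_X, Matrix.cons_val_zero,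
    Matrix.cons_val_one, Matrix.cons_val]
  ring

theorem passesInf8_circumConic_iff {a b c t : ℂ} (hb : b = -a) :
    PassesInf8 (circumConic a b c) t ↔ c = a * t := by
  subst hb
  have hstrict : ∀ y₂ w₂ : ℂ, localEq (circumConic a (-a) c) y₂ (y₂ * (y₂ * w₂ + 1)) =
      y₂ ^ 2 * eval ![y₂, w₂] (C c * X 0 * X 1 - C a * X 1 + C c) := by
    intro y₂ w₂
    simp only [localEq_circumConic, map_add, map_sub, map_mul, eval_C, eval_X,
      Matrix.cons_val_zero, Matrix.cons_val_one, Matrix.cons_val_fin_one]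
    ring
  constructor
  · rintro ⟨h, hh, h0⟩
    have : h = C c * X 0 * X 1 - C a * X 1 + C c := by
      refine eq_of_forall_pow_mul_eval_eq 0 2 fun v => ?_
      have hv : ![v 0, v 1] = v := by ext i; fin_cases i <;> rfl
      have := (hh (v 0) (v 1)).symm.trans (hstrict (v 0) (v 1))
      rwa [hv] at this
    subst this
    simp only [map_add, map_sub, map_mul, eval_C, eval_X, Matrix.cons_val_zero,
      Matrix.cons_val_one, Matrix.cons_val_fin_one] at h0
    linear_combination h0
  · rintro rfl
    exact ⟨_, hstrict, by simp⟩

theorem irreducible_conic8 {t : ℂ} (ht : t ≠ 0) : Irreducible (conic8 t) := by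
  set f : MvPolynomial (Fin 3) ℂ := X 0 - C t * X 1
  have hf : Irreducible f := by
    refine irreducible_of_totalDegree_eq_one ?_ fun r hr => isUnit_of_dvd_one ?_
    · refine ((isHomogeneous_X ℂ 0).sub (isHomogeneous_C_mul_X t 1)).totalDegree fun h => ?_
      simpa [f] using congrArg (eval ![1, 0, 0]) h
    · simpa [f, coeff_X, coeff_C_mul, Finsupp.single_eq_single_iff] using hr (Finsupp.single 0 1)
  have hf_not_dvd : ¬ f ∣ -(X 0 * X 1) := by
    rintro ⟨q, hq⟩
    simpa [f, ht] using congrArg (eval ![t, 1, 0]) hq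
  have hconic : conic8 t = f * X 2 + -(X 0 * X 1) := by
    simp only [conic8, f]; ring
  rw [hconic]
  refine irreducible_mul_X_add _ _ 2 hf.ne_zero ?_ ?_ (hf.isRelPrime_iff_not_dvd.2 hf_not_dvd)
  · intro h
    simpa [vars_C_mul _ ht] using vars_sub_subset _ h
  · rw [vars_neg]
    intro h
    simpa using vars_mul (X 0) (X 1) h

theorem conic8_eq_circumConic (t : ℂ) : conic8 t = circumConic (-1) 1 (-t) := by
  simp only [conic8, circumConic, map_neg, map_one]
  ring

/-- For `t ∈ ℂ*` the conic `xz - xy - t·yz = 0` is irreducible, passes through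
`p₁ = [1:0:0]`, `p₂ = [0:1:0]`, `p₃ = [0:0:1]`, has tangent line `y = z` at `p₁`, passes
through the second-order infinitely near point with standard coordinates `(p₁, 1, t)`,
and is the unique conic with these properties (up to a nonzero scalar). -/
theorem stmt8 (t : ℂ) (ht : t ≠ 0) :
    (conic8 t).IsHomogeneous 2 ∧
    Irreducible (conic8 t) ∧
    eval ![1, 0, 0] (conic8 t) = 0 ∧
    eval ![0, 1, 0] (conic8 t) = 0 ∧
    eval ![0, 0, 1] (conic8 t) = 0 ∧
    TangentYeqZ (conic8 t) ![1, 0, 0] ∧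
    PassesInf8 (conic8 t) t ∧
    ∀ g : MvPolynomial (Fin 3) ℂ, g.IsHomogeneous 2 → g ≠ 0 →
      eval ![1, 0, 0] g = 0 → eval ![0, 1, 0] g = 0 → eval ![0, 0, 1] g = 0 →
      TangentYeqZ g ![1, 0, 0] → PassesInf8 g t →
      ∃ c : ℂ, c ≠ 0 ∧ g = c • conic8 t := by
  refine ⟨?_, irreducible_conic8 ht, by simp [conic8], by simp [conic8], by simp [conic8], ?_, ?_,
    fun g hg _ h₁ h₂ h₃ htan hpass => ?_⟩
  · rw [conic8_eq_circumConic]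
    exact isHomogeneous_circumConic _ _ _
  · rw [conic8_eq_circumConic, tangentYeqZ_circumConic_iff]
    norm_num
  · rw [conic8_eq_circumConic, passesInf8_circumConic_iff (neg_neg 1).symm]
    ring
  · obtain ⟨a, b, c, rfl⟩ := exists_eq_circumConic hg h₁ h₂ h₃
    obtain ⟨ha, rfl⟩ := tangentYeqZ_circumConic_iff.1 htan
    obtain rfl := (passesInf8_circumConic_iff rfl).1 hpass
    refine ⟨-a, neg_ne_zero.2 ha, ?_⟩
    simp only [conic8_eq_circumConic, circumConic, smul_eq_C_mul, map_neg, map_mul, map_one]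
    ring
end
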